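/- There do not exist five distinct vertices a, b, c, d, e ∈ V such that φ(bc) = φ(de), φ(ad) = φ(cd), and φ(ab) = φ(ac), where φ is the Modified CFLS coloring. -/

import Mathlib

/-!
Let `K` be the first block in which `b` and `c` differ. Since `φ(bc) = φ(de)`, the edge `de`
also first differs in block `K` with `{d^K, e^K} = {b^K, c^K}`, so `d^K` is `b^K` or `c^K`.
The coordinate `i_K` of the color is the position of the first differing bit, and three strings
with pairwise equal first-difference positions must coincide (at that position their bits would
be pairwise distinct). If `d^K = b^K`, the equalities `φ(ab) = φ(ac)` and `φ(ad) = φ(cd)` make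
the three positions among `a^K, b^K, c^K` equal; if `d^K = c^K`, they give `a^K = c^K` and then
`a^K = b^K`. Either way `b^K = c^K`, a contradiction.
-/

namespace CFLS

/-- A vertex of `K_n` for `n = 2^(m^2)`: `m` blocks, each a string of `m` bits.
`x k` is the `k`-th block `x^(k+1)`, and `x k j` is its `j`-th bit (most significant first). -/
abbrev Vtx (m : ℕ) := Fin m → Fin m → Bool

/-- The `j`-th bit of a bit string (as a total function of `j : ℕ`). -/
def bitAt {N : ℕ} (f : Fin N → Bool) (j : ℕ) : Bool :=
  if h : j < N then f ⟨j, h⟩ else false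

/-- The value of a bit string read as a binary integer, most significant bit first. -/
def strToNat {N : ℕ} (f : Fin N → Bool) : ℕ :=
  ∑ j : Fin N, if f j then 2 ^ (N - 1 - j.val) else 0

/-- The `k`-th block of a vertex (as a total function of `k : ℕ`). -/
def blockAt {m : ℕ} (x : Vtx m) (k : ℕ) : Fin m → Bool :=
  if h : k < m then x ⟨k, h⟩ else fun _ => false

/-- The least block index at which `x` and `y` differ. -/
noncomputable def firstDiffBlock {m : ℕ} (x y : Vtx m) : ℕ :=
  sInf {k | blockAt x k ≠ blockAt y k}

/-- The position (1-indexed) of the first bit at which two bit strings differ; `0` if equal. -/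
noncomputable def firstDiffIdx {N : ℕ} (f g : Fin N → Bool) : ℕ :=
  if f = g then 0 else sInf {j | bitAt f j ≠ bitAt g j} + 1

/-- The value of a vertex read as a binary integer (concatenation of its blocks). -/
def vtxToNat {m : ℕ} (x : Vtx m) : ℕ :=
  ∑ k : Fin m, strToNat (x k) * (2 ^ m) ^ (m - 1 - k.val)

/-- The colors of the Modified CFLS coloring:
`((i, {x^(i), y^(i)}), i_1, …, i_m, δ_1, …, δ_m)`. -/
abbrev Color (m : ℕ) := (ℕ × Set (Fin m → Bool)) × (Fin m → ℕ) × (Fin m → ℤ)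

/-- The Modified CFLS color of the edge `xy` assuming `x ≤ y` as binary integers. -/
noncomputable def phiAux {m : ℕ} (x y : Vtx m) : Color m :=
  ((firstDiffBlock x y,
      {blockAt x (firstDiffBlock x y), blockAt y (firstDiffBlock x y)}),
   fun k => firstDiffIdx (x k) (y k),
   fun k => if strToNat (x k) ≤ strToNat (y k) then (1 : ℤ) else -1)

/-- The Modified CFLS coloring `φ`. -/
noncomputable def phi {m : ℕ} (x y : Vtx m) : Color m :=
  if vtxToNat x ≤ vtxToNat y then phiAux x y else phiAux y x

/-- The ten edges among five vertices. -/
def edgeList {m : ℕ} (a b c d e : Vtx m) : List (Vtx m × Vtx m) :=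
  [(a,b),(a,c),(a,d),(a,e),(b,c),(b,d),(b,e),(c,d),(c,e),(d,e)]

/-- The number of the ten edges among `a,b,c,d,e` receiving color `col` under `φ`. -/
noncomputable def colorCount {m : ℕ} (a b c d e : Vtx m) (col : Color m) : ℕ :=
  ((edgeList a b c d e).map fun p => phi p.1 p.2).countP fun x =>
    @decide (x = col) (Classical.propDecidable _)

/-- Five pairwise distinct vertices. -/
def Distinct5 {m : ℕ} (a b c d e : Vtx m) : Prop :=
  a ≠ b ∧ a ≠ c ∧ a ≠ d ∧ a ≠ e ∧ b ≠ c ∧ b ≠ d ∧ b ≠ e ∧ c ≠ d ∧ c ≠ e ∧ d ≠ e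

/-- `col` appears on some edge among `a,b,c,d,e`. -/
noncomputable def IsAttained {m : ℕ} (a b c d e : Vtx m) (col : Color m) : Prop :=
  colorCount a b c d e col ≠ 0

/-- A 2-2-2-2-2 configuration: five distinct vertices such that `φ` on the ten edges
among them takes exactly five values, each attained on exactly two edges. -/
def IsConfig22222 {m : ℕ} (a b c d e : Vtx m) : Prop :=
  Distinct5 a b c d e ∧
  ∀ col : Color m, colorCount a b c d e col = 0 ∨ colorCount a b c d e col = 2

/-- The color class of `col` is a matching: two vertex-disjoint edges of color `col`. -/
def IsMatchingClass {m : ℕ} (a b c d e : Vtx m) (col : Color m) : Prop :=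
  ∃ p ∈ edgeList a b c d e, ∃ q ∈ edgeList a b c d e,
    phi p.1 p.2 = col ∧ phi q.1 q.2 = col ∧
    p.1 ≠ q.1 ∧ p.1 ≠ q.2 ∧ p.2 ≠ q.1 ∧ p.2 ≠ q.2

/-- The color class of `col` is a path: two distinct edges of color `col` sharing a vertex. -/
def IsPathClass {m : ℕ} (a b c d e : Vtx m) (col : Color m) : Prop :=
  ∃ p ∈ edgeList a b c d e, ∃ q ∈ edgeList a b c d e,
    p ≠ q ∧ phi p.1 p.2 = col ∧ phi q.1 q.2 = col ∧
    (p.1 = q.1 ∨ p.1 = q.2 ∨ p.2 = q.1 ∨ p.2 = q.2)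

section FirstDiffIdx

variable {N : ℕ}

lemma firstDiffIdx_symm (f g : Fin N → Bool) : firstDiffIdx f g = firstDiffIdx g f := by
  simp only [firstDiffIdx, eq_comm (a := f), ne_comm (a := bitAt f _)]

lemma firstDiffIdx_eq_zero {f g : Fin N → Bool} : firstDiffIdx f g = 0 ↔ f = g := by
  unfold firstDiffIdx
  split <;> simp_all

lemma bitAt_ne_of_firstDiffIdx_eq_succ {f g : Fin N → Bool} {n : ℕ}
    (h : firstDiffIdx f g = n + 1) : bitAt f n ≠ bitAt g n := by
  have hfg : f ≠ g := fun hfg => by simp [firstDiffIdx, hfg] at h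
  obtain ⟨j, hj⟩ := Function.ne_iff.mp hfg
  have hne : {j | bitAt f j ≠ bitAt g j}.Nonempty := ⟨j, by simpa [bitAt] using hj⟩
  rw [firstDiffIdx, if_neg hfg, Nat.add_right_cancel_iff] at h
  exact h ▸ Nat.sInf_mem hne

lemma eq_of_firstDiffIdx_eq_of_eq {A X Y : Fin N → Bool}
    (hX : firstDiffIdx A X = firstDiffIdx X Y) (hY : firstDiffIdx A Y = firstDiffIdx X Y) :
    X = Y := by
  rcases hXY : firstDiffIdx X Y with _ | n
  · exact firstDiffIdx_eq_zero.mp hXY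
  · have h₁ := bitAt_ne_of_firstDiffIdx_eq_succ (hX.trans hXY)
    have h₂ := bitAt_ne_of_firstDiffIdx_eq_succ (hY.trans hXY)
    have h₃ := bitAt_ne_of_firstDiffIdx_eq_succ hXY
    exfalso
    revert h₁ h₂ h₃
    cases bitAt A n <;> cases bitAt X n <;> cases bitAt Y n <;> decide

end FirstDiffIdx

section Phi

variable {m : ℕ}

lemma firstDiffBlock_symm (x y : Vtx m) : firstDiffBlock x y = firstDiffBlock y x := by
  simp only [firstDiffBlock, ne_comm (a := blockAt x _)]

lemma exists_firstDiffBlock_eq {x y : Vtx m} (h : x ≠ y) :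
    ∃ K : Fin m, firstDiffBlock x y = K ∧ x K ≠ y K := by
  obtain ⟨k, hk⟩ := Function.ne_iff.mp h
  have hk' : k.val ∈ {k | blockAt x k ≠ blockAt y k} := by simpa [blockAt] using hk
  have hlt : firstDiffBlock x y < m := (Nat.sInf_le hk').trans_lt k.isLt
  have hmem : blockAt x (firstDiffBlock x y) ≠ blockAt y (firstDiffBlock x y) :=
    Nat.sInf_mem ⟨_, hk'⟩
  simp only [blockAt, hlt, dite_true] at hmem
  exact ⟨⟨_, hlt⟩, rfl, hmem⟩

lemma phi_fst (x y : Vtx m) :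
    (phi x y).1 = (firstDiffBlock x y,
      {blockAt x (firstDiffBlock x y), blockAt y (firstDiffBlock x y)}) := by
  unfold phi phiAux
  split
  · rfl
  · simp [firstDiffBlock_symm y x, Set.pair_comm]

lemma phi_idx (x y : Vtx m) (k : Fin m) : (phi x y).2.1 k = firstDiffIdx (x k) (y k) := by
  unfold phi phiAux
  split
  · rfl
  · exact firstDiffIdx_symm (y k) (x k)

lemma exists_block_ne_of_phi_eq {b c d e : Vtx m} (hbc : b ≠ c) (h : phi b c = phi d e) :
    ∃ K : Fin m, b K ≠ c K ∧ (d K = b K ∨ d K = c K) := by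
  obtain ⟨K, hK, hne⟩ := exists_firstDiffBlock_eq hbc
  have h' := congrArg Prod.fst h
  rw [phi_fst, phi_fst] at h'
  obtain ⟨hi, hset⟩ := Prod.mk.inj h'
  rw [← hi, hK] at hset
  simp only [blockAt, K.isLt, dite_true] at hset
  have hd : d K ∈ ({b K, c K} : Set (Fin m → Bool)) := hset ▸ Set.mem_insert _ _
  exact ⟨K, hne, hd⟩

end Phi

theorem no_last_forbidden_general (m : ℕ) :
    ¬ ∃ a b c d e : Vtx m, Distinct5 a b c d e ∧
      phi b c = phi d e ∧ phi a d = phi c d ∧ phi a b = phi a c := by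
  rintro ⟨a, b, c, d, e, hd, hbcde, hadcd, habac⟩
  obtain ⟨K, hbcK, hdK⟩ := exists_block_ne_of_phi_eq hd.2.2.2.2.1 hbcde
  have hab_ac : firstDiffIdx (a K) (b K) = firstDiffIdx (a K) (c K) := by
    simpa [phi_idx] using congrArg (·.2.1 K) habac
  have had_cd : firstDiffIdx (a K) (d K) = firstDiffIdx (c K) (d K) := by
    simpa [phi_idx] using congrArg (·.2.1 K) hadcd
  rcases hdK with hdb | hdc
  · rw [hdb, firstDiffIdx_symm (c K)] at had_cd
    exact hbcK (eq_of_firstDiffIdx_eq_of_eq had_cd (hab_ac.symm.trans had_cd))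
  · rw [hdc, firstDiffIdx_eq_zero.mpr rfl, firstDiffIdx_eq_zero] at had_cd
    rw [had_cd, firstDiffIdx_eq_zero.mpr rfl, firstDiffIdx_eq_zero] at hab_ac
    exact hbcK hab_ac.symm

/-- The configuration of Figure (D) is forbidden under the Modified CFLS coloring. -/
theorem no_last_forbidden (m : ℕ) (hm : 0 < m) :
    ¬ ∃ a b c d e : Vtx m, Distinct5 a b c d e ∧
      phi b c = phi d e ∧ phi a d = phi c d ∧ phi a b = phi a c :=
  no_last_forbidden_general m

end CFLS
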